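/- arXiv:1910.10248 — 4 statements merged into one kernel-verified Lean document; each statement's English description precedes it below -/
import Mathlib

section
/- Let K be a C¹-smooth convex body in the hyperbolic plane ℍ that is symmetric about a point p in its interior and has constant width w > 0. Then K is a disc; more precisely, K = Metric.closedBall p (w/2). -/
open scoped UpperHalfPlane
open Set Metric

/-- A unit-speed parametrization of a geodesic line in `ℍ`. -/
def IsGeodesicParam (γ : ℝ → ℍ) : Prop := ∀ s t : ℝ, dist (γ s) (γ t) = |s - t|

/-- A geodesic line in `ℍ`. -/
def IsGeodesicLine (Γ : Set ℍ) : Prop := ∃ γ : ℝ → ℍ, IsGeodesicParam γ ∧ Γ = Set.range γ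

/-- The geodesic segment `[x,y]` in `ℍ`. -/
def Seg (x y : ℍ) : Set ℍ := {z : ℍ | dist x z + dist z y = dist x y}

/-- Hyperbolic convexity: with any two points, `K` contains the geodesic segment joining them. -/
def HypConvex (K : Set ℍ) : Prop := ∀ ⦃x⦄, x ∈ K → ∀ ⦃y⦄, y ∈ K → Seg x y ⊆ K

/-- A convex body: compact, convex, with nonempty interior. -/
def IsConvexBody (K : Set ℍ) : Prop := IsCompact K ∧ HypConvex K ∧ (interior K).Nonempty

/-- The orthogonal projection of `K` onto a geodesic line `Γ`. -/
def Proj (Γ K : Set ℍ) : Set ℍ :=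
  {p : ℍ | p ∈ Γ ∧ ∃ k ∈ K, dist k p = Metric.infDist k Γ}

/-- `Γ` is normal to `K` at the frontier point `x`: `x` is an endpoint of the projection. -/
def IsNormalAt (K Γ : Set ℍ) (x : ℍ) : Prop :=
  x ∈ frontier K ∧ ∃ γ : ℝ → ℍ, IsGeodesicParam γ ∧ Γ = Set.range γ ∧
    ∃ s : ℝ, γ s = x ∧ (Proj Γ K ⊆ γ '' Set.Ici s ∨ Proj Γ K ⊆ γ '' Set.Iic s)

/-- `Γ` is a double normal of `K`. -/
def IsDoubleNormal (K Γ : Set ℍ) : Prop := (K ∩ Γ).Nonempty ∧ Proj Γ K = K ∩ Γ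

/-- `K` has constant width `w > 0`. -/
def HasConstantWidth (K : Set ℍ) (w : ℝ) : Prop :=
  0 < w ∧
  (∀ x ∈ frontier K, ∃ Γ : Set ℍ, IsGeodesicLine Γ ∧ IsNormalAt K Γ x) ∧
  ∀ Γ : Set ℍ, IsGeodesicLine Γ → (∃ x, IsNormalAt K Γ x) →
    IsDoubleNormal K Γ ∧ Metric.diam (K ∩ Γ) = w

/-- `K` is symmetric about `p`. -/
def SymmetricAbout (K : Set ℍ) (p : ℍ) : Prop :=
  ∀ x ∈ K, ∀ y : ℍ, dist x p = dist p y → dist x y = dist x p + dist p y → y ∈ K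

/-- `K` is `C¹`-smooth: its frontier, viewed in `ℂ`, is the image of a periodic `C¹`
map with nowhere-vanishing derivative, injective on a period. -/
def IsC1Smooth (K : Set ℍ) : Prop :=
  ∃ (r : ℝ → ℂ) (T : ℝ), 0 < T ∧ Function.Periodic r T ∧ ContDiff ℝ 1 r ∧
    (∀ t : ℝ, deriv r t ≠ 0) ∧ Set.InjOn r (Set.Ico 0 T) ∧
    (fun z : ℍ => (z : ℂ)) '' frontier K = Set.range r

/-!
Let `x₀` be a point of `K` farthest from `p`, at distance `R`. For every `k ∈ K` the foot of the
perpendicular from `k` to the geodesic through `p` and `x₀` lies within `dist p k ≤ R` of `p`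
(hyperbolic Pythagoras), so this geodesic is normal to `K` at `x₀`, hence a double normal whose
chord has length `w`; by symmetry the chord contains the reflection of `x₀` in `p`, so `2R ≤ w`.
Conversely, at a frontier point `x` the chord of a normal lies on one side of `x`, so each of its
points is within `dist x p + w / 2` of `x`, giving `w ≤ dist p x + w / 2`. So `K` lies in the
closed disc of radius `w / 2` and its frontier does not meet the open disc; a geodesic segment
from `p` to a point of the closed disc outside `K` would have to cross the frontier, which is
impossible.
-/

open Real

lemma Real.eq_of_mul_cosh_sub_le_self {C u v : ℝ} (hC : 1 ≤ C) (h : C * cosh (v - u) ≤ C) :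
    v = u := by
  have : cosh (v - u) ≤ 1 := by nlinarith [one_le_cosh (v - u)]
  exact sub_eq_zero.mp (not_not.mp fun hne => (one_lt_cosh.mpr hne).not_ge this)

lemma Real.exists_mul_cosh_sub_eq {A B : ℝ} (hA : 0 < A) (hAB : 1 ≤ A ^ 2 - B ^ 2) :
    ∃ C u : ℝ, 1 ≤ C ∧ ∀ t, A * cosh t - B * sinh t = C * cosh (t - u) := by
  set C := √(A ^ 2 - B ^ 2)
  have hC2 : C ^ 2 = A ^ 2 - B ^ 2 := Real.sq_sqrt (by linarith)
  have hC1 : 1 ≤ C := Real.one_le_sqrt.mpr hAB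
  have hcosh : cosh (arsinh (B / C)) = A / C := by
    rw [cosh_arsinh, show 1 + (B / C) ^ 2 = (A / C) ^ 2 by field_simp; linarith]
    exact Real.sqrt_sq (by positivity)
  refine ⟨C, arsinh (B / C), hC1, fun t => ?_⟩
  rw [cosh_sub, sinh_arsinh, hcosh]
  field_simp

lemma UpperHalfPlane.cosh_dist_eq_re_im (z w : ℍ) :
    cosh (dist z w) = 1 + ((z.re - w.re) ^ 2 + (z.im - w.im) ^ 2) / (2 * z.im * w.im) := by
  rw [UpperHalfPlane.cosh_dist, Complex.dist_eq_re_im, Real.sq_sqrt (by positivity)]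
  simp only [UpperHalfPlane.coe_re, UpperHalfPlane.coe_im]

lemma IsPreconnected.inter_frontier_nonempty {X : Type*} [TopologicalSpace X] {S K : Set X}
    (hS : IsPreconnected S) (hin : (S ∩ K).Nonempty) (hout : (S \ K).Nonempty) :
    (S ∩ frontier K).Nonempty := by
  by_contra hfr
  have hcover : S ⊆ interior K ∪ (closure K)ᶜ := fun x hx => by
    by_contra h
    simp only [mem_union, mem_compl_iff, not_or, not_not] at h
    exact hfr ⟨x, hx, h.2, h.1⟩
  obtain ⟨x, hxS, hxK⟩ := hout
  have hx : x ∈ (closure K)ᶜ :=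
    (hcover hxS).resolve_left fun hint => hxK (interior_subset hint)
  obtain ⟨y, hyS, hyK⟩ := hin
  exact hS.subset_right_of_subset_union isOpen_interior isClosed_closure.isOpen_compl
    (disjoint_compl_right.mono_left interior_subset_closure) hcover ⟨x, hxS, hx⟩ hyS
    (subset_closure hyK)

lemma IsGeodesicParam.isometry {γ : ℝ → ℍ} (hγ : IsGeodesicParam γ) : Isometry γ :=
  Isometry.of_dist_eq fun s t => (hγ s t).trans (Real.dist_eq s t).symm

lemma IsGeodesicParam.dist_le_max_of_mem_image {γ : ℝ → ℍ} (hγ : IsGeodesicParam γ)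
    {s : ℝ} {I : Set ℝ} (hI : I = Ici s ∨ I = Iic s) {y z : ℍ}
    (hy : y ∈ γ '' I) (hz : z ∈ γ '' I) : dist y z ≤ max (dist (γ s) y) (dist (γ s) z) := by
  obtain ⟨t₁, ht₁, rfl⟩ := hy
  obtain ⟨t₂, ht₂, rfl⟩ := hz
  rw [hγ, hγ, hγ]
  rcases hI with rfl | rfl <;> simp only [mem_Ici, mem_Iic] at ht₁ ht₂ <;>
    grind [abs_le, le_max_iff]

/-- Hyperbolic Pythagoras along `γ`: `γ u` is the foot of the perpendicular from `k`, and
`C = cosh (dist k (γ u))`. -/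
def HasCoshDistLaw (γ : ℝ → ℍ) : Prop :=
  ∀ k : ℍ, ∃ C u : ℝ, 1 ≤ C ∧ ∀ t, cosh (dist k (γ t)) = C * cosh (t - u)

namespace HasCoshDistLaw

variable {γ : ℝ → ℍ}

lemma isGeodesicParam (hγ : HasCoshDistLaw γ) : IsGeodesicParam γ := by
  intro s t
  obtain ⟨C, u, hC, hcosh⟩ := hγ (γ s)
  have h1 : 1 = C * cosh (s - u) := by simpa using hcosh s
  have hs : s = u := Real.eq_of_mul_cosh_sub_le_self hC (by linarith)
  have hC1 : C = 1 := by simpa [hs] using h1.symm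
  have h : cosh (dist (γ s) (γ t)) = cosh (s - t) := by
    rw [hcosh t, hC1, one_mul, hs, ← cosh_neg, neg_sub]
  simpa [abs_of_nonneg dist_nonneg] using
    le_antisymm (cosh_le_cosh.mp h.le) (cosh_le_cosh.mp h.ge)

lemma abs_sub_le_dist_of_eq_infDist (hγ : HasCoshDistLaw γ) {k : ℍ} {v : ℝ}
    (hv : dist k (γ v) = infDist k (range γ)) (s : ℝ) : |s - v| ≤ dist k (γ s) := by
  obtain ⟨C, u, hC, hcosh⟩ := hγ k
  have hvu : v = u := by
    refine Real.eq_of_mul_cosh_sub_le_self hC ?_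
    have hle : dist k (γ v) ≤ dist k (γ u) := hv.le.trans (infDist_le_dist_of_mem ⟨u, rfl⟩)
    have := cosh_le_cosh.mpr (abs_le_abs_of_nonneg dist_nonneg hle)
    rwa [hcosh, hcosh, sub_self, cosh_zero, mul_one] at this
  have : cosh (s - u) ≤ cosh (dist k (γ s)) := by
    rw [hcosh s]; nlinarith [cosh_pos (s - u)]
  simpa [hvu, abs_of_nonneg dist_nonneg] using cosh_le_cosh.mp this

lemma comp_add_const (hγ : HasCoshDistLaw γ) (a : ℝ) : HasCoshDistLaw fun t => γ (t + a) := by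
  intro k
  obtain ⟨C, u, hC, hcosh⟩ := hγ k
  exact ⟨C, u - a, hC, fun t => by rw [hcosh]; ring_nf⟩

lemma comp_neg (hγ : HasCoshDistLaw γ) : HasCoshDistLaw fun t => γ (-t) := by
  intro k
  obtain ⟨C, u, hC, hcosh⟩ := hγ k
  exact ⟨C, -u, hC, fun t => by rw [hcosh, ← cosh_neg]; ring_nf⟩

lemma exists_reparam_through (hγ : HasCoshDistLaw γ) (sa sb : ℝ) :
    ∃ γ' : ℝ → ℍ, HasCoshDistLaw γ' ∧ γ' 0 = γ sa ∧ γ' (dist (γ sa) (γ sb)) = γ sb := by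
  rw [hγ.isGeodesicParam]
  rcases le_total sa sb with h | h
  · refine ⟨fun t => γ (t + sa), hγ.comp_add_const sa, by simp, ?_⟩
    simp [abs_of_nonpos (sub_nonpos.mpr h)]
  · refine ⟨fun t => γ (-t + sa), (hγ.comp_add_const sa).comp_neg, by simp, ?_⟩
    simp [abs_of_nonneg (sub_nonneg.mpr h)]

lemma of_cosh_sinh
    (h : ∀ k : ℍ, ∃ A B : ℝ, 0 < A ∧ 1 ≤ A ^ 2 - B ^ 2 ∧
      ∀ t, cosh (dist k (γ t)) = A * cosh t - B * sinh t) :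
    HasCoshDistLaw γ := by
  intro k
  obtain ⟨A, B, hA, hAB, hk⟩ := h k
  obtain ⟨C, u, hC, hrep⟩ := exists_mul_cosh_sub_eq hA hAB
  exact ⟨C, u, hC, fun t => (hk t).trans (hrep t)⟩

end HasCoshDistLaw

noncomputable def verticalGeodesic (a : ℝ) (t : ℝ) : ℍ :=
  UpperHalfPlane.mk ⟨a, exp t⟩ (exp_pos t)

@[simp] lemma verticalGeodesic_re (a t : ℝ) : (verticalGeodesic a t).re = a := rfl
@[simp] lemma verticalGeodesic_im (a t : ℝ) : (verticalGeodesic a t).im = exp t := rfl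

lemma verticalGeodesic_log_im {a : ℝ} {z : ℍ} (hz : z.re = a) :
    verticalGeodesic a (log z.im) = z :=
  UpperHalfPlane.ext_re_im hz.symm (exp_log z.im_pos)

lemma hasCoshDistLaw_verticalGeodesic (a : ℝ) : HasCoshDistLaw (verticalGeodesic a) := by
  refine HasCoshDistLaw.of_cosh_sinh fun k => ?_
  have hb : 0 < k.im := k.im_pos
  set q := (k.re - a) ^ 2 + k.im ^ 2
  refine ⟨(q + 1) / (2 * k.im), (q - 1) / (2 * k.im), by positivity, ?_, fun t => ?_⟩
  · rw [show ((q + 1) / (2 * k.im)) ^ 2 - ((q - 1) / (2 * k.im)) ^ 2 = q / k.im ^ 2 by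
      field_simp; ring, le_div_iff₀ (by positivity)]
    nlinarith [sq_nonneg (k.re - a)]
  · rw [UpperHalfPlane.cosh_dist_eq_re_im, cosh_eq, sinh_eq, exp_neg]
    simp only [verticalGeodesic_re, verticalGeodesic_im]
    field_simp
    ring

noncomputable def semicircleGeodesic (c : ℝ) {r : ℝ} (hr : 0 < r) (t : ℝ) : ℍ :=
  UpperHalfPlane.mk ⟨c + r * tanh t, r / cosh t⟩ (div_pos hr (cosh_pos t))

@[simp] lemma semicircleGeodesic_re (c : ℝ) {r : ℝ} (hr : 0 < r) (t : ℝ) :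
    (semicircleGeodesic c hr t).re = c + r * tanh t := rfl
@[simp] lemma semicircleGeodesic_im (c : ℝ) {r : ℝ} (hr : 0 < r) (t : ℝ) :
    (semicircleGeodesic c hr t).im = r / cosh t := rfl

lemma semicircleGeodesic_arsinh {c r : ℝ} (hr : 0 < r) {z : ℍ}
    (hz : (z.re - c) ^ 2 + z.im ^ 2 = r ^ 2) :
    semicircleGeodesic c hr (arsinh ((z.re - c) / z.im)) = z := by
  have hb : 0 < z.im := z.im_pos
  have hcosh : cosh (arsinh ((z.re - c) / z.im)) = r / z.im := by
    rw [cosh_arsinh, show 1 + ((z.re - c) / z.im) ^ 2 = (r / z.im) ^ 2 by field_simp; linarith]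
    exact Real.sqrt_sq (by positivity)
  apply UpperHalfPlane.ext_re_im
  · rw [semicircleGeodesic_re, tanh_eq_sinh_div_cosh, sinh_arsinh, hcosh]
    field_simp
    ring
  · rw [semicircleGeodesic_im, hcosh]
    field_simp

lemma hasCoshDistLaw_semicircleGeodesic (c : ℝ) {r : ℝ} (hr : 0 < r) :
    HasCoshDistLaw (semicircleGeodesic c hr) := by
  refine HasCoshDistLaw.of_cosh_sinh fun k => ?_
  have hb : 0 < k.im := k.im_pos
  refine ⟨((k.re - c) ^ 2 + k.im ^ 2 + r ^ 2) / (2 * k.im * r), (k.re - c) / k.im,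
    by positivity, ?_, fun t => ?_⟩
  · rw [show (((k.re - c) ^ 2 + k.im ^ 2 + r ^ 2) / (2 * k.im * r)) ^ 2 - ((k.re - c) / k.im) ^ 2
        = 1 + (((k.re - c) ^ 2 + k.im ^ 2 - r ^ 2) / (2 * k.im * r)) ^ 2 by field_simp; ring]
    nlinarith [sq_nonneg (((k.re - c) ^ 2 + k.im ^ 2 - r ^ 2) / (2 * k.im * r))]
  · have hch : 0 < cosh t := cosh_pos t
    rw [UpperHalfPlane.cosh_dist_eq_re_im, semicircleGeodesic_re, semicircleGeodesic_im,
      tanh_eq_sinh_div_cosh]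
    field_simp
    linear_combination (-r ^ 2) * cosh_sq t

/-- Through two points with equal real parts runs a vertical geodesic, otherwise a semicircle
centred on the real axis at the point equidistant (in `ℂ`) from both. -/
lemma exists_hasCoshDistLaw_through (a b : ℍ) :
    ∃ γ : ℝ → ℍ, HasCoshDistLaw γ ∧ γ 0 = a ∧ γ (dist a b) = b := by
  by_cases hre : a.re = b.re
  · simpa only [verticalGeodesic_log_im rfl, verticalGeodesic_log_im hre.symm] using
      (hasCoshDistLaw_verticalGeodesic a.re).exists_reparam_through (log a.im) (log b.im)
  · set c := (a.re ^ 2 + a.im ^ 2 - b.re ^ 2 - b.im ^ 2) / (2 * (a.re - b.re))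
    have hc : 2 * c * (a.re - b.re) = a.re ^ 2 + a.im ^ 2 - b.re ^ 2 - b.im ^ 2 := by
      simp only [c]; field_simp [sub_ne_zero.mpr hre]
    have hpos : 0 < (a.re - c) ^ 2 + a.im ^ 2 := by positivity
    set r := √((a.re - c) ^ 2 + a.im ^ 2)
    have hr : 0 < r := Real.sqrt_pos.mpr hpos
    have ha : (a.re - c) ^ 2 + a.im ^ 2 = r ^ 2 := (Real.sq_sqrt hpos.le).symm
    have hb : (b.re - c) ^ 2 + b.im ^ 2 = r ^ 2 := by rw [← ha]; linear_combination hc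
    simpa only [semicircleGeodesic_arsinh hr ha, semicircleGeodesic_arsinh hr hb] using
      (hasCoshDistLaw_semicircleGeodesic c hr).exists_reparam_through
        (arsinh ((a.re - c) / a.im)) (arsinh ((b.re - c) / b.im))

section ConstantWidth

variable {K : Set ℍ} {p : ℍ} {w : ℝ}

lemma SymmetricAbout.apply_neg_mem (hsym : SymmetricAbout K p) {γ : ℝ → ℍ}
    (hγ : IsGeodesicParam γ) (h0 : γ 0 = p) {t : ℝ} (ht : γ t ∈ K) : γ (-t) ∈ K := by
  apply hsym _ ht <;> rw [← h0]
  · rw [hγ, hγ, sub_zero, zero_sub, abs_neg, abs_neg]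
  · rw [hγ, hγ, hγ, sub_zero, zero_sub, abs_neg, abs_neg, sub_neg_eq_add, ← two_mul, abs_mul,
      abs_two, two_mul]

lemma mem_frontier_of_isMaxOn_dist {x : ℍ} (hx : x ∈ K) (hmax : IsMaxOn (dist p) K x) :
    x ∈ frontier K := by
  refine ⟨subset_closure hx, fun hint => ?_⟩
  obtain ⟨γ, hγ, h0, hγx⟩ := exists_hasCoshDistLaw_through p x
  replace hγ := hγ.isGeodesicParam
  obtain ⟨ε, hε, hball⟩ := Metric.isOpen_iff.mp isOpen_interior x hint
  set R := dist p x
  have hR : 0 ≤ R := dist_nonneg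
  have hmem : γ (R + ε / 2) ∈ K := by
    refine interior_subset (hball ?_)
    rw [mem_ball, ← hγx, hγ, add_sub_cancel_left, abs_of_pos (half_pos hε)]
    exact half_lt_self hε
  have hfar : dist p (γ (R + ε / 2)) ≤ R := hmax hmem
  rw [← h0, hγ, zero_sub, abs_neg, abs_of_pos (by positivity)] at hfar
  linarith

lemma isNormalAt_range_of_forall_dist_le {x : ℍ} (hx : x ∈ frontier K) {γ : ℝ → ℍ}
    (hγ : HasCoshDistLaw γ) (h0 : γ 0 = p) (hγx : γ (dist p x) = x)
    (hmax : ∀ k ∈ K, dist p k ≤ dist p x) : IsNormalAt K (range γ) x := by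
  refine ⟨hx, γ, hγ.isGeodesicParam, rfl, dist p x, hγx, Or.inr ?_⟩
  rintro _ ⟨⟨v, rfl⟩, k, hk, hkv⟩
  have hfoot := hγ.abs_sub_le_dist_of_eq_infDist hkv 0
  rw [h0, dist_comm] at hfoot
  exact ⟨v, show v ≤ dist p x by linarith [neg_le_abs (0 - v), hmax k hk], rfl⟩

lemma dist_le_half_width (hK : IsCompact K) (hp : p ∈ K) (hsym : SymmetricAbout K p)
    (hcw : HasConstantWidth K w) {k : ℍ} (hk : k ∈ K) : dist p k ≤ w / 2 := by
  obtain ⟨x, hxK, hmax⟩ :=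
    hK.exists_isMaxOn ⟨p, hp⟩ (continuous_const.dist continuous_id).continuousOn
  obtain ⟨γ, hγ, h0, hγx⟩ := exists_hasCoshDistLaw_through p x
  set R := dist p x
  have hmax' : ∀ k ∈ K, dist p k ≤ R := fun k hk => hmax hk
  have hnormal := isNormalAt_range_of_forall_dist_le (mem_frontier_of_isMaxOn_dist hxK hmax)
    hγ h0 hγx hmax'
  have hdiam : diam (K ∩ range γ) = w :=
    (hcw.2.2 _ ⟨γ, hγ.isGeodesicParam, rfl⟩ ⟨x, hnormal⟩).2
  have hxK' : γ R ∈ K := hγx ▸ hxK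
  have hopp : γ (-R) ∈ K := hsym.apply_neg_mem hγ.isGeodesicParam h0 hxK'
  have h2R : 2 * R ≤ w := calc
    2 * R = dist (γ R) (γ (-R)) := by
      rw [hγ.isGeodesicParam, sub_neg_eq_add, ← two_mul, abs_of_nonneg (by positivity)]
    _ ≤ diam (K ∩ range γ) :=
      dist_le_diam_of_mem (hK.isBounded.subset inter_subset_left) ⟨hxK', R, rfl⟩
        ⟨hopp, -R, rfl⟩
    _ = w := hdiam
  linarith [hmax' k hk]

lemma half_width_le_dist_of_mem_frontier (hcw : HasConstantWidth K w)
    (hK : ∀ k ∈ K, dist p k ≤ w / 2) {x : ℍ} (hx : x ∈ frontier K) : w / 2 ≤ dist p x := by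
  obtain ⟨Γ, hΓ, hnormal⟩ := hcw.2.1 x hx
  obtain ⟨⟨-, hproj⟩, hdiam⟩ := hcw.2.2 Γ hΓ ⟨x, hnormal⟩
  obtain ⟨-, γ, hγ, rfl, s, rfl, hside⟩ := hnormal
  obtain ⟨I, hI, hsub⟩ : ∃ I, (I = Ici s ∨ I = Iic s) ∧ K ∩ range γ ⊆ γ '' I := by
    rw [← hproj]
    rcases hside with h | h
    exacts [⟨_, Or.inl rfl, h⟩, ⟨_, Or.inr rfl, h⟩]
  have hw : diam (K ∩ range γ) ≤ dist p (γ s) + w / 2 := by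
    refine diam_le_of_forall_dist_le (add_nonneg dist_nonneg (by linarith [hcw.1]))
      fun y hy z hz => (hγ.dist_le_max_of_mem_image hI (hsub hy) (hsub hz)).trans (max_le ?_ ?_)
    · linarith [dist_triangle (γ s) p y, dist_comm (γ s) p, hK y hy.1]
    · linarith [dist_triangle (γ s) p z, dist_comm (γ s) p, hK z hz.1]
  linarith

lemma closedBall_subset_of_le_dist_frontier {r : ℝ} (hK : IsClosed K) (hp : p ∈ K)
    (h : ∀ x ∈ frontier K, r ≤ dist p x) : closedBall p r ⊆ K := by
  intro z hz
  by_contra hzK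
  obtain ⟨γ, hγ, h0, hγz⟩ := exists_hasCoshDistLaw_through p z
  replace hγ := hγ.isGeodesicParam
  have hseg : IsPreconnected (γ '' Icc 0 (dist p z)) :=
    isPreconnected_Icc.image γ hγ.isometry.continuous.continuousOn
  obtain ⟨_, ⟨t, ht, rfl⟩, hfr⟩ := hseg.inter_frontier_nonempty
    ⟨p, ⟨0, ⟨le_rfl, dist_nonneg⟩, h0⟩, hp⟩ ⟨z, ⟨_, ⟨dist_nonneg, le_rfl⟩, hγz⟩, hzK⟩
  have hdist : dist p (γ t) = t := by rw [← h0, hγ, zero_sub, abs_neg, abs_of_nonneg ht.1]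
  have htz : t = dist p z := by
    have := h _ hfr
    rw [mem_closedBall, dist_comm] at hz
    linarith [ht.2]
  exact hzK (hγz ▸ htz ▸ hK.frontier_subset hfr)

end ConstantWidth

theorem symmetric_constantWidth_is_disc_general (K : Set ℍ) (p : ℍ) (w : ℝ)
    (hK : IsConvexBody K)
    (hp : p ∈ interior K) (hsym : SymmetricAbout K p)
    (hcw : HasConstantWidth K w) :
    K = Metric.closedBall p (w / 2) := by
  have hcomp : IsCompact K := hK.1
  have hpK : p ∈ K := interior_subset hp
  have hball : ∀ k ∈ K, dist p k ≤ w / 2 := fun k => dist_le_half_width hcomp hpK hsym hcw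
  refine subset_antisymm (fun k hk => ?_) <|
    closedBall_subset_of_le_dist_frontier hcomp.isClosed hpK fun x =>
      half_width_le_dist_of_mem_frontier hcw hball
  rw [mem_closedBall, dist_comm]
  exact hball k hk

/-- **Theorem 4.1.** A `C¹`-smooth convex body in `ℍ` which is symmetric about an interior
point `p` and has constant width `w > 0` is the disc of radius `w/2` centered at `p`. -/
theorem symmetric_constantWidth_is_disc (K : Set ℍ) (p : ℍ) (w : ℝ)
    (hK : IsConvexBody K) (hsm : IsC1Smooth K)
    (hp : p ∈ interior K) (hsym : SymmetricAbout K p)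
    (hcw : HasConstantWidth K w) :
    K = Metric.closedBall p (w / 2) :=
  symmetric_constantWidth_is_disc_general K p w hK hp hsym hcw
end

section
/- Let K be a convex body in the hyperbolic plane ℍ that is symmetric about a point p in its interior, and suppose there is a constant c such that every projection of K onto a geodesic line through p has length c (Metric.diam (P_Γ(K)) = c for all Γ ∈ H_p). Then K is a disc; more precisely, K = Metric.closedBall p (c/2). -/
open scoped UpperHalfPlane
open Set Metric

/-!
Every point `z` lies on a geodesic `γ` through `p`, and `γ` can be taken as an `SL(2, ℝ)`-image
of the imaginary axis. Projecting onto `γ` amounts to taking the parameter of the foot of the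
perpendicular, governed by hyperbolic Pythagoras
`cosh d(k, γ t) = cosh d(k, γ t₀) * cosh (t - t₀)`, so `|t₀| ≤ d(k, p)` with equality only on `γ`.
Central symmetry maps `γ t` to `γ (-t)`, so a point of `K` at distance `d` from `p` forces a
projection of length `2d`: hence `K` lies in the disc of radius `c/2`. Conversely the projection
onto `γ` has length `c`, so some `k ∈ K` has `|t₀| ≥ c/2 ≥ d(k, p)`; then `k = γ (±c/2)`, both
endpoints `γ (±c/2)` lie in `K`, and convexity puts `z` between them.
-/

open scoped MatrixGroups
open Real

noncomputable section

namespace UpperHalfPlane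

def imagAxis (t : ℝ) : ℍ := mk ⟨0, exp t⟩ (exp_pos t)

@[simp] lemma imagAxis_re (t : ℝ) : (imagAxis t).re = 0 := rfl

@[simp] lemma imagAxis_im (t : ℝ) : (imagAxis t).im = exp t := rfl

lemma imagAxis_zero : imagAxis 0 = I := by
  ext; simp [imagAxis, Complex.ext_iff]

lemma isometry_imagAxis : Isometry imagAxis := isometry_vertical_line 0

lemma norm_coe_pos (k : ℍ) : 0 < ‖(k : ℂ)‖ := norm_pos_iff.mpr k.ne_zero

lemma cosh_dist_imagAxis_eq (k : ℍ) (t : ℝ) :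
    cosh (dist k (imagAxis t)) = ‖(k : ℂ)‖ / k.im * cosh (t - log ‖(k : ℂ)‖) := by
  have hr := norm_coe_pos k
  have hsq : ‖(k : ℂ)‖ ^ 2 = k.re ^ 2 + k.im ^ 2 := by
    rw [Complex.sq_norm, Complex.normSq_apply]; simp only [coe_re, coe_im]; ring
  have hv := k.im_pos
  rw [cosh_dist', cosh_eq, exp_sub, exp_neg, exp_sub, exp_log hr, imagAxis_re, imagAxis_im]
  field_simp
  rw [hsq]
  ring

/-- Hyperbolic Pythagoras: the foot of `k` on the imaginary axis is `i ‖k‖`. -/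
lemma cosh_dist_imagAxis (k : ℍ) (t : ℝ) :
    cosh (dist k (imagAxis t)) =
      cosh (dist k (imagAxis (log ‖(k : ℂ)‖))) * cosh (t - log ‖(k : ℂ)‖) := by
  rw [cosh_dist_imagAxis_eq, cosh_dist_imagAxis_eq k (log _), sub_self, cosh_zero, mul_one]

-- `a (1 + z w) = b (w - z)` is `(b z + a) / (-a z + b) = w` with the denominator cleared.
lemma exists_smul_eq_of_mul_eq {z w : ℍ} {a b : ℝ} (hab : a ≠ 0 ∨ b ≠ 0)
    (h : (a : ℂ) * (1 + z * w) = b * (w - z)) : ∃ k : SL(2, ℝ), k • I = I ∧ k • z = w := by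
  have hr : 0 < √(a ^ 2 + b ^ 2) := by
    apply Real.sqrt_pos.mpr
    rcases hab with hab | hab <;> positivity
  set r := √(a ^ 2 + b ^ 2)
  let k : SL(2, ℝ) := ⟨!![b / r, a / r; -(a / r), b / r], by
    rw [Matrix.det_fin_two_of]
    field_simp
    rw [Real.sq_sqrt (by positivity)]
    ring⟩
  have hk : ∀ z w : ℍ, (a : ℂ) * (1 + z * w) = b * (w - z) → k • z = w := by
    intro z w h
    ext1
    rw [coe_specialLinearGroup_apply, div_eq_iff (mod_cast denom_ne_zero k z)]
    have hr' : (r : ℂ) ≠ 0 := mod_cast hr.ne'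
    simp [k]
    field_simp
    linear_combination h
  exact ⟨k, hk I I (by rw [coe_I, Complex.I_mul_I]; ring), hk z w h⟩

lemma exists_smul_I_eq_and_smul_imagAxis_eq (w : ℍ) :
    ∃ k : SL(2, ℝ), k • I = I ∧ k • imagAxis (dist I w) = w := by
  set s := exp (dist I w)
  have hs : 0 < s := exp_pos _
  have hv := w.im_pos
  have hcosh : s * (w.re ^ 2 + w.im ^ 2 + 1) = w.im * (s ^ 2 + 1) := by
    have h := cosh_dist' I w
    rw [cosh_eq, exp_neg, I_re, I_im] at h
    field_simp at h
    linear_combination -h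
  have hz : ((imagAxis (dist I w) : ℍ) : ℂ) = s * Complex.I := by
    apply Complex.ext <;> simp [imagAxis, s, -Complex.ofReal_exp]
  have hw : (w : ℂ) = w.re + w.im * Complex.I := (re_add_im w).symm
  -- Solve `a (1 + i s w) = b (w - i s)` for real `(a, b)`; `hcosh` is its solvability condition.
  by_cases h0 : w.re = 0 ∧ s * w.im = 1
  · refine exists_smul_eq_of_mul_eq (a := 1) (b := 0) (Or.inl one_ne_zero) ?_
    rw [hz, hw, h0.1]
    apply Complex.ext <;> simp
    linarith [h0.2]
  · refine exists_smul_eq_of_mul_eq (a := w.re) (b := 1 - s * w.im) ?_ ?_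
    · rw [sub_ne_zero, ne_comm]; tauto
    rw [hz, hw]
    apply Complex.ext <;> simp
    · ring
    · linear_combination hcosh

lemma cosh_dist_le_cosh_dist_iff {x y z w : ℍ} :
    cosh (dist x y) ≤ cosh (dist z w) ↔ dist x y ≤ dist z w := by
  rw [cosh_le_cosh, abs_of_nonneg dist_nonneg, abs_of_nonneg dist_nonneg]

variable (g : SL(2, ℝ))

def geodesic (t : ℝ) : ℍ := g • imagAxis t

def footParam (k : ℍ) : ℝ := log ‖((g⁻¹ • k : ℍ) : ℂ)‖

lemma exists_geodesic_eq (p z : ℍ) :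
    ∃ g : SL(2, ℝ), geodesic g 0 = p ∧ geodesic g (dist p z) = z := by
  obtain ⟨g, rfl⟩ := MulAction.exists_smul_eq SL(2, ℝ) I p
  obtain ⟨k, hkI, hkz⟩ := exists_smul_I_eq_and_smul_imagAxis_eq (g⁻¹ • z)
  refine ⟨g * k, ?_, ?_⟩
  · rw [geodesic, imagAxis_zero, mul_smul, hkI]
  · rw [geodesic, mul_smul, ← dist_smul g⁻¹, inv_smul_smul, hkz, smul_inv_smul]

lemma dist_geodesic_geodesic (s t : ℝ) : dist (geodesic g s) (geodesic g t) = |s - t| := by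
  rw [geodesic, geodesic, dist_smul, isometry_imagAxis.dist_eq, Real.dist_eq]

lemma isGeodesicLine_range_geodesic : IsGeodesicLine (range (geodesic g)) :=
  ⟨geodesic g, dist_geodesic_geodesic g, rfl⟩

lemma isometry_geodesic : Isometry (geodesic g) :=
  Isometry.of_dist_eq fun s t => by rw [dist_geodesic_geodesic, Real.dist_eq]

lemma cosh_dist_geodesic (k : ℍ) (t : ℝ) :
    cosh (dist k (geodesic g t)) =
      cosh (dist k (geodesic g (footParam g k))) * cosh (t - footParam g k) := by
  simp only [geodesic, ← dist_smul g⁻¹ k, inv_smul_smul]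
  exact cosh_dist_imagAxis _ t

lemma dist_geodesic_footParam_le (k : ℍ) (t : ℝ) :
    dist k (geodesic g (footParam g k)) ≤ dist k (geodesic g t) := by
  rw [← cosh_dist_le_cosh_dist_iff, cosh_dist_geodesic g k t]
  exact le_mul_of_one_le_right (cosh_pos _).le (one_le_cosh _)

lemma eq_footParam_of_dist_le {k : ℍ} {t : ℝ}
    (h : dist k (geodesic g t) ≤ dist k (geodesic g (footParam g k))) : t = footParam g k := by
  rw [← cosh_dist_le_cosh_dist_iff, cosh_dist_geodesic g k t] at h
  have h1 : cosh (t - footParam g k) ≤ 1 := le_of_mul_le_mul_left (by simpa using h) (cosh_pos _)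
  exact sub_eq_zero.1 (not_not.1 (mt one_lt_cosh.2 h1.not_gt))

lemma infDist_range_geodesic (k : ℍ) :
    infDist k (range (geodesic g)) = dist k (geodesic g (footParam g k)) :=
  le_antisymm (infDist_le_dist_of_mem (mem_range_self _))
    ((le_infDist (range_nonempty _)).2 <| forall_mem_range.2 <| dist_geodesic_footParam_le g k)

lemma footParam_geodesic (t : ℝ) : footParam g (geodesic g t) = t :=
  (eq_footParam_of_dist_le g (t := t) (by rw [dist_self]; exact dist_nonneg)).symm

lemma proj_range_geodesic (K : Set ℍ) :
    Proj (range (geodesic g)) K = geodesic g '' (footParam g '' K) := by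
  ext q
  constructor
  · rintro ⟨⟨t, rfl⟩, k, hk, hd⟩
    rw [infDist_range_geodesic] at hd
    exact ⟨t, ⟨k, hk, (eq_footParam_of_dist_le g hd.le).symm⟩, rfl⟩
  · rintro ⟨-, ⟨k, hk, rfl⟩, rfl⟩
    exact ⟨mem_range_self _, k, hk, (infDist_range_geodesic g k).symm⟩

lemma continuous_footParam : Continuous (footParam g) :=
  (continuous_norm.comp (continuous_coe.comp (continuous_const_smul g⁻¹))).log
    fun _ => (norm_coe_pos _).ne'

lemma eq_geodesic_footParam_of_dist_le {k : ℍ} (h : dist k (geodesic g 0) ≤ |footParam g k|) :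
    k = geodesic g (footParam g k) := by
  have h1 := cosh_le_cosh.2 ((abs_of_nonneg dist_nonneg).trans_le h)
  rw [cosh_dist_geodesic, zero_sub, cosh_neg] at h1
  have h2 : cosh (dist k (geodesic g (footParam g k))) ≤ 1 :=
    le_of_mul_le_mul_right (by simpa using h1) (cosh_pos _)
  exact dist_eq_zero.1 (not_not.1 (mt one_lt_cosh.2 h2.not_gt))

lemma geodesic_mem_seg {t a : ℝ} (h : |t| ≤ |a|) :
    geodesic g t ∈ Seg (geodesic g (-a)) (geodesic g a) := by
  simp only [Seg, mem_ofPred_eq, dist_geodesic_geodesic]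
  rcases abs_le.1 h with ⟨h1, h2⟩
  grind

lemma geodesic_neg_mem {K : Set ℍ} (hsym : SymmetricAbout K (geodesic g 0)) {t : ℝ}
    (ht : geodesic g t ∈ K) : geodesic g (-t) ∈ K :=
  hsym _ ht _ (by simp [dist_geodesic_geodesic]) (by simp [dist_geodesic_geodesic]; grind)

variable {g} {K : Set ℍ} {c : ℝ}

lemma two_mul_abs_le_of_geodesic_mem (hK : IsCompact K) (hsym : SymmetricAbout K (geodesic g 0))
    (hc : diam (footParam g '' K) ≤ c) {t : ℝ} (ht : geodesic g t ∈ K) : 2 * |t| ≤ c := by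
  have hmem : ∀ s, geodesic g s ∈ K → s ∈ footParam g '' K :=
    fun s hs => ⟨_, hs, footParam_geodesic g s⟩
  calc 2 * |t| = dist t (-t) := by rw [Real.dist_eq]; grind
    _ ≤ diam (footParam g '' K) :=
      dist_le_diam_of_mem (hK.image (continuous_footParam g)).isBounded (hmem t ht)
        (hmem _ (geodesic_neg_mem g hsym ht))
    _ ≤ c := hc

lemma exists_geodesic_mem_of_le_diam (hK : IsCompact K) (hne : K.Nonempty)
    (hball : K ⊆ closedBall (geodesic g 0) (c / 2)) (hc : c ≤ diam (footParam g '' K)) :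
    ∃ a, c ≤ 2 * |a| ∧ geodesic g a ∈ K := by
  obtain ⟨k, hk, hmax⟩ :=
    hK.exists_isMaxOn hne (continuous_abs.comp (continuous_footParam g)).continuousOn
  have hdiam : diam (footParam g '' K) ≤ 2 * |footParam g k| := by
    refine (diam_mono (t := closedBall 0 _) ?_ isBounded_closedBall).trans
      (diam_closedBall (abs_nonneg _))
    rintro - ⟨x, hx, rfl⟩
    simpa [Real.dist_eq] using hmax hx
  have hk_dist : dist k (geodesic g 0) ≤ |footParam g k| := by
    linarith [mem_closedBall.1 (hball hk)]
  refine ⟨footParam g k, by linarith, ?_⟩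
  rwa [← eq_geodesic_footParam_of_dist_le g hk_dist]

end UpperHalfPlane

end

open UpperHalfPlane

theorem symmetric_constantProjections_is_disc_general (K : Set ℍ) (p : ℍ) (c : ℝ)
    (hK : IsConvexBody K) (hsym : SymmetricAbout K p)
    (hproj : ∀ Γ : Set ℍ, IsGeodesicLine Γ → p ∈ Γ → Metric.diam (Proj Γ K) = c) :
    K = Metric.closedBall p (c / 2) := by
  obtain ⟨hKc, hKconv, hKint⟩ := hK
  have hdiam (g : SL(2, ℝ)) (hg : geodesic g 0 = p) : diam (footParam g '' K) = c := by
    rw [← hproj _ (isGeodesicLine_range_geodesic g) ⟨0, hg⟩, proj_range_geodesic,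
      (isometry_geodesic g).diam_image]
  have hball : K ⊆ closedBall p (c / 2) := by
    intro x hx
    obtain ⟨g, hg0, hgx⟩ := exists_geodesic_eq p x
    have h := two_mul_abs_le_of_geodesic_mem hKc (hg0 ▸ hsym) (hdiam g hg0).le
      (by rwa [hgx])
    rw [abs_of_nonneg dist_nonneg] at h
    rw [mem_closedBall, dist_comm]
    linarith
  refine hball.antisymm fun z hz => ?_
  obtain ⟨g, hg0, hgz⟩ := exists_geodesic_eq p z
  obtain ⟨a, hca, ha⟩ := exists_geodesic_mem_of_le_diam hKc (hKint.mono interior_subset)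
    (hg0 ▸ hball) (hdiam g hg0).ge
  have hza : |dist p z| ≤ |a| := by
    rw [abs_of_nonneg dist_nonneg, dist_comm]
    linarith [mem_closedBall.1 hz]
  rw [← hgz]
  exact hKconv (geodesic_neg_mem g (hg0 ▸ hsym) ha) ha (geodesic_mem_seg g hza)

/-- A convex body symmetric about an interior point `p`, all of whose projections onto
geodesic lines through `p` have constant length `c`, is the disc of radius `c/2` centered
at `p`. -/
theorem symmetric_constantProjections_is_disc (K : Set ℍ) (p : ℍ) (c : ℝ)
    (hK : IsConvexBody K) (hp : p ∈ interior K) (hsym : SymmetricAbout K p)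
    (hproj : ∀ Γ : Set ℍ, IsGeodesicLine Γ → p ∈ Γ → Metric.diam (Proj Γ K) = c) :
    K = Metric.closedBall p (c / 2) :=
  symmetric_constantProjections_is_disc_general K p c hK hsym hproj
end

section
/- Fix t > 0. Let R, r, R', r' be real numbers with R > r > t and R' > r' > t. If Real.log (R / r) = Real.log (R' / r') and Real.log (Real.sqrt (R^2 − t^2) / Real.sqrt (r^2 − t^2)) = Real.log (Real.sqrt (R'^2 − t^2) / Real.sqrt (r'^2 − t^2)), then R = R' and r = r'. (In the upper half-plane model, these two logarithms are the lengths of the orthogonal and shifted projections of a slab bounded by concentric semicircular geodesics of radii r < R onto the vertical geodesics at Euclidean distance 0 and t from their common center; the injectivity shows a convex body is determined by its projection lengths on these two families of geodesics.) -/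
/-!
The first length fixes the ratio `λ = R / r`. Writing `R = λ r`, the square of the second
ratio is `(λ² r² - t²) / (r² - t²) = λ² + (λ² - 1) t² / (r² - t²)`, which is strictly
monotone in `r²` because `(λ² - 1) t² ≠ 0`; so it fixes `r`, and then `R = λ r`.
-/

open Real

theorem sq_sub_div_sq_sub_eq (R r c : ℝ) (hr : r ≠ 0) (hrc : r ^ 2 - c ≠ 0) :
    (R ^ 2 - c) / (r ^ 2 - c) = (R / r) ^ 2 + ((R / r) ^ 2 - 1) * c / (r ^ 2 - c) := by
  field_simp
  ring

theorem sq_eq_sq_of_div_eq_of_sq_sub_div_eq {R r R' r' c : ℝ} (hc : c ≠ 0)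
    (hr : r ≠ 0) (hr' : r' ≠ 0) (hrc : r ^ 2 - c ≠ 0) (hrc' : r' ^ 2 - c ≠ 0)
    (hratio_sq : (R / r) ^ 2 ≠ 1) (hratio : R / r = R' / r')
    (hsq : (R ^ 2 - c) / (r ^ 2 - c) = (R' ^ 2 - c) / (r' ^ 2 - c)) :
    r ^ 2 = r' ^ 2 := by
  rw [sq_sub_div_sq_sub_eq R r c hr hrc, sq_sub_div_sq_sub_eq R' r' c hr' hrc', ← hratio,
    add_right_inj, div_eq_div_iff hrc hrc'] at hsq
  have hnum : ((R / r) ^ 2 - 1) * c ≠ 0 := mul_ne_zero (sub_ne_zero.2 hratio_sq) hc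
  linarith [mul_left_cancel₀ hnum hsq]

/-- The map `(R, r) ↦ (log (R/r), log (√(R²−t²)/√(r²−t²)))` is injective on the domain
`{(R, r) | R > r > t}`: a convex body in the upper half-plane is determined by its
projection lengths onto the two families of vertical geodesics at distance `0` and `t`
from the center of its supporting semicircles. -/
theorem projections_two_families_determine (t R r R' r' : ℝ)
    (ht : 0 < t) (hRr : r < R) (hrt : t < r) (hRr' : r' < R') (hrt' : t < r')
    (h1 : Real.log (R / r) = Real.log (R' / r'))
    (h2 : Real.log (Real.sqrt (R ^ 2 - t ^ 2) / Real.sqrt (r ^ 2 - t ^ 2)) =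
          Real.log (Real.sqrt (R' ^ 2 - t ^ 2) / Real.sqrt (r' ^ 2 - t ^ 2))) :
    R = R' ∧ r = r' := by
  have hr : 0 < r := ht.trans hrt
  have hr' : 0 < r' := ht.trans hrt'
  have hrt2 : 0 < r ^ 2 - t ^ 2 := by nlinarith
  have hrt2' : 0 < r' ^ 2 - t ^ 2 := by nlinarith
  have hRt2 : 0 < R ^ 2 - t ^ 2 := by nlinarith
  have hRt2' : 0 < R' ^ 2 - t ^ 2 := by nlinarith
  have hratio : R / r = R' / r' :=
    log_injOn_pos (div_pos (hr.trans hRr) hr) (div_pos (hr'.trans hRr') hr') h1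
  have hsq : (R ^ 2 - t ^ 2) / (r ^ 2 - t ^ 2) = (R' ^ 2 - t ^ 2) / (r' ^ 2 - t ^ 2) := by
    rw [← sqrt_inj (div_pos hRt2 hrt2).le (div_pos hRt2' hrt2').le, sqrt_div' _ hrt2.le,
      sqrt_div' _ hrt2'.le]
    exact log_injOn_pos (by simp only [Set.mem_Ioi]; positivity)
      (by simp only [Set.mem_Ioi]; positivity) h2
  have hratio_sq : (R / r) ^ 2 ≠ 1 := (one_lt_pow₀ ((one_lt_div hr).2 hRr) two_ne_zero).ne'
  have hrr' : r = r' := (sq_eq_sq₀ hr.le hr'.le).1 <|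
    sq_eq_sq_of_div_eq_of_sq_sub_div_eq (by positivity) hr.ne' hr'.ne' hrt2.ne' hrt2'.ne'
      hratio_sq hratio hsq
  subst hrr'
  exact ⟨(div_left_inj' hr.ne').1 hratio, rfl⟩
end

section
/- Let K be a convex body in the hyperbolic plane ℍ and let x, y ∈ K with dist x y = Metric.diam K. Then the geodesic line Γ through x and y is a double normal of K; moreover P_Γ(K) = K ∩ Γ = [x, y]. In particular, every convex body has at least one double normal. -/
open scoped UpperHalfPlane
open Set Metric

/-!
In the hyperboloid model, `cosh (dist k (γ s)) = C * cosh (s - s₀)` with `C ≥ 1` for every point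
`k` and unit-speed geodesic `γ`, by a reverse Cauchy–Schwarz inequality for the Minkowski form.
So `γ s₀` is the unique nearest point of `γ` to `k`, `|s - s₀| ≤ dist k (γ s)`, and `C = 1` only
when `k = γ s₀`. For `x = γ a`, `y = γ b` realizing the diameter, the first two facts put the
foot point of every `k ∈ K` within `|a - b|` of both `a` and `b`, hence into `[x, y]`; the last one
shows `[x, y] ⊆ Γ`, and convexity gives `[x, y] ⊆ K`.
-/

open Real

noncomputable def minkowski : LinearMap.BilinForm ℝ (ℝ × ℝ × ℝ) :=
  LinearMap.mk₂ ℝ (fun p q => p.1 * q.1 - p.2.1 * q.2.1 - p.2.2 * q.2.2)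
    (fun _ _ _ => by simp only [Prod.fst_add, Prod.snd_add]; ring)
    (fun _ _ _ => by simp only [Prod.smul_fst, Prod.smul_snd, smul_eq_mul]; ring)
    (fun _ _ _ => by simp only [Prod.fst_add, Prod.snd_add]; ring)
    (fun _ _ _ => by simp only [Prod.smul_fst, Prod.smul_snd, smul_eq_mul]; ring)

@[simp]
lemma minkowski_apply (p q : ℝ × ℝ × ℝ) :
    minkowski p q = p.1 * q.1 - p.2.1 * q.2.1 - p.2.2 * q.2.2 := rfl

lemma minkowski_comm (p q : ℝ × ℝ × ℝ) : minkowski p q = minkowski q p := by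
  simp only [minkowski_apply]; ring

lemma minkowski_self_neg_of_orthogonal {u q : ℝ × ℝ × ℝ} (hu : 0 < minkowski u u)
    (hqu : minkowski q u = 0) (hq : q ≠ 0) : minkowski q q < 0 := by
  obtain ⟨q₀, q₁, q₂⟩ := q
  obtain ⟨u₀, u₁, u₂⟩ := u
  simp only [minkowski_apply] at *
  have key : u₀ ^ 2 * (q₀ * q₀ - q₁ * q₁ - q₂ * q₂) =
      -(q₁ * u₂ - q₂ * u₁) ^ 2 - (u₀ * u₀ - u₁ * u₁ - u₂ * u₂) * (q₁ ^ 2 + q₂ ^ 2) := by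
    linear_combination (q₀ * u₀ + q₁ * u₁ + q₂ * u₂) * hqu
  have hu₀ : 0 < u₀ ^ 2 := by nlinarith
  by_cases h₁₂ : q₁ = 0 ∧ q₂ = 0
  · obtain ⟨rfl, rfl⟩ := h₁₂
    have hu₀' : u₀ ≠ 0 := by rintro rfl; simp at hu₀
    have hq₀ : q₀ = 0 := by simpa [hu₀'] using hqu
    simp_all
  · have : 0 < q₁ ^ 2 + q₂ ^ 2 := by
      rcases not_and_or.1 h₁₂ with h | h <;> positivity
    nlinarith

lemma minkowski_residual {u v : ℝ × ℝ × ℝ} (hu : minkowski u u = 1) (hv : minkowski v v = -1)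
    (huv : minkowski u v = 0) (p : ℝ × ℝ × ℝ) :
    minkowski (p - minkowski p u • u + minkowski p v • v) u = 0 ∧
      minkowski (p - minkowski p u • u + minkowski p v • v)
          (p - minkowski p u • u + minkowski p v • v) =
        minkowski p p - minkowski p u ^ 2 + minkowski p v ^ 2 := by
  have hvu : minkowski v u = 0 := minkowski_comm u v ▸ huv
  have hup : minkowski u p = minkowski p u := minkowski_comm u p
  have hvp : minkowski v p = minkowski p v := minkowski_comm v p
  simp only [map_add, map_sub, map_smul, LinearMap.add_apply, LinearMap.sub_apply,
    LinearMap.smul_apply, smul_eq_mul, hu, hv, huv, hvu, hup, hvp]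
  constructor <;> ring

lemma minkowski_self_le {u v : ℝ × ℝ × ℝ} (hu : minkowski u u = 1) (hv : minkowski v v = -1)
    (huv : minkowski u v = 0) (p : ℝ × ℝ × ℝ) :
    minkowski p p ≤ minkowski p u ^ 2 - minkowski p v ^ 2 := by
  obtain ⟨hqu, hqq⟩ := minkowski_residual hu hv huv p
  by_cases hq : p - minkowski p u • u + minkowski p v • v = 0
  · simp only [hq, map_zero] at hqq
    linarith
  · linarith [minkowski_self_neg_of_orthogonal (hu ▸ one_pos) hqu hq]

lemma eq_smul_sub_smul_of_minkowski_self_eq {u v p : ℝ × ℝ × ℝ} (hu : minkowski u u = 1)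
    (hv : minkowski v v = -1) (huv : minkowski u v = 0)
    (h : minkowski p p = minkowski p u ^ 2 - minkowski p v ^ 2) :
    p = minkowski p u • u - minkowski p v • v := by
  obtain ⟨hqu, hqq⟩ := minkowski_residual hu hv huv p
  by_contra hp
  have hq : p - minkowski p u • u + minkowski p v • v ≠ 0 := fun hq =>
    hp (by rw [← sub_eq_zero, ← hq]; abel)
  linarith [minkowski_self_neg_of_orthogonal (hu ▸ one_pos) hqu hq]

noncomputable def toHyperboloid (z : ℍ) : ℝ × ℝ × ℝ :=
  ((z.re ^ 2 + z.im ^ 2 + 1) / (2 * z.im), z.re / z.im, (z.re ^ 2 + z.im ^ 2 - 1) / (2 * z.im))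

lemma minkowski_toHyperboloid (z w : ℍ) :
    minkowski (toHyperboloid z) (toHyperboloid w) = cosh (dist z w) := by
  rw [UpperHalfPlane.cosh_dist, Complex.dist_eq_re_im, sq_sqrt (by positivity)]
  have hz := z.im_pos
  have hw := w.im_pos
  simp only [minkowski_apply, toHyperboloid, UpperHalfPlane.coe_re, UpperHalfPlane.coe_im]
  field_simp
  ring

lemma exists_eq_cosh_smul_add_sinh_smul {X : ℝ → ℝ × ℝ × ℝ}
    (hX : ∀ s t, minkowski (X s) (X t) = cosh (s - t)) :
    ∃ u v, minkowski u u = 1 ∧ minkowski v v = -1 ∧ minkowski u v = 0 ∧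
      ∀ s, X s = cosh s • u + sinh s • v := by
  have hsinh : sinh 1 ≠ 0 := (sinh_pos_iff.2 one_pos).ne'
  set v := (sinh 1)⁻¹ • (X 1 - cosh 1 • X 0)
  have hXv : ∀ s, minkowski (X s) v = -sinh s := by
    intro s
    simp only [v, map_smul, map_sub, hX, smul_eq_mul, cosh_sub, cosh_zero, sinh_zero]
    field_simp
    ring
  have hu : minkowski (X 0) (X 0) = 1 := by simp [hX]
  have huv : minkowski (X 0) v = 0 := by simpa using hXv 0
  have hv : minkowski v v = -1 := by
    simp only [v, map_smul, map_sub, LinearMap.smul_apply, LinearMap.sub_apply, smul_eq_mul,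
      hX, sub_self, sub_zero, zero_sub, cosh_zero, cosh_neg]
    field_simp
    linear_combination -cosh_sq_sub_sinh_sq 1
  refine ⟨X 0, v, hu, hv, huv, fun s => ?_⟩
  -- `X s` attains equality in `minkowski_self_le`, so it lies in the plane of `X 0` and `v`.
  have h := eq_smul_sub_smul_of_minkowski_self_eq hu hv huv (p := X s) (by
    rw [hX, hX, hXv, sub_self, cosh_zero, sub_zero, neg_sq]
    linear_combination (cosh_sq_sub_sinh_sq s).symm)
  rwa [hX, hXv, sub_zero, neg_smul, sub_neg_eq_add] at h

lemma exists_mul_cosh_sub_eq {A B : ℝ} (h : |B| < A) :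
    ∃ s₀, ∀ s, A * cosh s + B * sinh s = √(A ^ 2 - B ^ 2) * cosh (s - s₀) := by
  have hAB : 0 < A ^ 2 - B ^ 2 := by nlinarith [abs_nonneg B, sq_abs B]
  set C := √(A ^ 2 - B ^ 2)
  have hC : 0 < C := sqrt_pos.2 hAB
  have hC2 : C ^ 2 = A ^ 2 - B ^ 2 := sq_sqrt hAB.le
  refine ⟨arsinh (-B / C), fun s => ?_⟩
  have hcosh : cosh (arsinh (-B / C)) = A / C := by
    rw [cosh_arsinh, show 1 + (-B / C) ^ 2 = (A / C) ^ 2 by field_simp; linear_combination hC2,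
      sqrt_sq (div_pos ((abs_nonneg B).trans_lt h) hC).le]
  rw [cosh_sub, hcosh, sinh_arsinh]
  field_simp
  ring

lemma exists_minkowski_eq_mul_cosh {X : ℝ → ℝ × ℝ × ℝ}
    (hX : ∀ s t, minkowski (X s) (X t) = cosh (s - t)) {k : ℝ × ℝ × ℝ}
    (hk : minkowski k k = 1) (hk₀ : 0 < minkowski k (X 0)) :
    ∃ C s₀, 1 ≤ C ∧ ∀ s, minkowski k (X s) = C * cosh (s - s₀) := by
  obtain ⟨u, v, hu, hv, huv, hXuv⟩ := exists_eq_cosh_smul_add_sinh_smul hX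
  have hexpand : ∀ s, minkowski k (X s) = minkowski k u * cosh s + minkowski k v * sinh s := by
    intro s
    rw [hXuv, map_add, map_smul, map_smul, smul_eq_mul, smul_eq_mul]
    ring
  have hgap : 1 ≤ minkowski k u ^ 2 - minkowski k v ^ 2 := hk ▸ minkowski_self_le hu hv huv k
  have hku : 0 < minkowski k u := by simpa [hexpand] using hk₀
  obtain ⟨s₀, hs₀⟩ := exists_mul_cosh_sub_eq (abs_lt_of_sq_lt_sq (by linarith) hku.le)
  exact ⟨_, s₀, one_le_sqrt.2 hgap, fun s => (hexpand s).trans (hs₀ s)⟩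

lemma mem_uIcc_of_abs_sub_le {a b t : ℝ} (ha : |a - t| ≤ |a - b|) (hb : |b - t| ≤ |a - b|) :
    t ∈ uIcc a b := by
  rw [mem_uIcc]
  rcases le_total a b with hab | hab
  · rw [abs_of_nonpos (sub_nonpos.2 hab), abs_le] at ha hb
    exact Or.inl ⟨by linarith, by linarith⟩
  · rw [abs_of_nonneg (sub_nonneg.2 hab), abs_le] at ha hb
    exact Or.inr ⟨by linarith, by linarith⟩

namespace IsGeodesicParam

variable {γ : ℝ → ℍ}

lemma isometry_s12 (hγ : IsGeodesicParam γ) : Isometry γ :=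
  Isometry.of_dist_eq fun s t => (hγ s t).trans (Real.dist_eq s t).symm

lemma mem_seg_iff (hγ : IsGeodesicParam γ) {a b t : ℝ} :
    γ t ∈ Seg (γ a) (γ b) ↔ t ∈ uIcc a b := by
  simp only [Seg, mem_ofPred_eq, hγ.isometry_s12.dist_eq]
  rw [← segment_eq_uIcc, mem_segment_iff_wbtw, dist_add_dist_eq_iff]

lemma exists_cosh_dist_eq (hγ : IsGeodesicParam γ) (k : ℍ) :
    ∃ C s₀, 1 ≤ C ∧ ∀ s, cosh (dist k (γ s)) = C * cosh (s - s₀) := by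
  have hX : ∀ s t, minkowski (toHyperboloid (γ s)) (toHyperboloid (γ t)) = cosh (s - t) :=
    fun s t => by rw [minkowski_toHyperboloid, hγ, cosh_abs]
  have hk : minkowski (toHyperboloid k) (toHyperboloid k) = 1 := by
    rw [minkowski_toHyperboloid, dist_self, cosh_zero]
  have hk₀ : 0 < minkowski (toHyperboloid k) (toHyperboloid (γ 0)) := by
    rw [minkowski_toHyperboloid]; exact cosh_pos _
  simpa only [minkowski_toHyperboloid] using exists_minkowski_eq_mul_cosh hX hk hk₀

lemma seg_eq_image (hγ : IsGeodesicParam γ) (a b : ℝ) : Seg (γ a) (γ b) = γ '' uIcc a b := by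
  refine Subset.antisymm (fun z hz => ?_) (image_subset_iff.2 fun t => hγ.mem_seg_iff.2)
  obtain ⟨C, s₀, hC, hz_cosh⟩ := hγ.exists_cosh_dist_eq z
  have hC_eq : C = 1 := by
    by_contra hC_ne
    have hlt : ∀ s, |s - s₀| < dist z (γ s) := fun s => by
      rw [← abs_dist, ← cosh_lt_cosh, hz_cosh]
      nlinarith [one_le_cosh (s - s₀), lt_of_le_of_ne hC (Ne.symm hC_ne)]
    have : dist (γ a) z + dist z (γ b) = dist (γ a) (γ b) := hz
    rw [dist_comm, hγ] at this
    linarith [hlt a, hlt b, abs_sub_le a s₀ b, abs_sub_comm b s₀]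
  have hz : z = γ s₀ := by
    have : ¬ 1 < cosh (dist z (γ s₀)) := by simp [hz_cosh, hC_eq]
    exact dist_eq_zero.1 (not_not.1 (mt one_lt_cosh.2 this))
  subst hz
  exact ⟨s₀, hγ.mem_seg_iff.1 hz, rfl⟩

lemma abs_sub_le_dist_of_dist_eq_infDist (hγ : IsGeodesicParam γ) {k : ℍ} {t : ℝ}
    (hfoot : dist k (γ t) = infDist k (range γ)) (s : ℝ) : |s - t| ≤ dist k (γ s) := by
  obtain ⟨C, s₀, hC, hk_cosh⟩ := hγ.exists_cosh_dist_eq k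
  have hts : t = s₀ := by
    have hle : cosh (dist k (γ t)) ≤ cosh (dist k (γ s₀)) := by
      rw [cosh_le_cosh, abs_dist, abs_dist, hfoot]
      exact infDist_le_dist_of_mem (mem_range_self s₀)
    rw [hk_cosh, hk_cosh, sub_self, cosh_zero] at hle
    have : ¬ 1 < cosh (t - s₀) := by nlinarith
    exact sub_eq_zero.1 (not_not.1 (mt one_lt_cosh.2 this))
  rw [hts, ← abs_dist, ← cosh_le_cosh, hk_cosh]
  nlinarith [one_le_cosh (s - s₀)]

end IsGeodesicParam

lemma inter_subset_proj (Γ K : Set ℍ) : K ∩ Γ ⊆ Proj Γ K :=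
  fun p ⟨hpK, hpΓ⟩ => ⟨hpΓ, p, hpK, by rw [dist_self, infDist_zero_of_mem hpΓ]⟩

/-- **Remark.** A diameter of a convex body lies on a double normal: if `x, y ∈ K` realize
the diameter and `Γ` is the geodesic line through `x` and `y`, then `Γ` is a double normal
of `K` with `P_Γ(K) = K ∩ Γ = [x, y]`. In particular, every convex body has a double
normal. -/
theorem diameter_is_doubleNormal (K Γ : Set ℍ) (x y : ℍ)
    (hK : IsConvexBody K) (hx : x ∈ K) (hy : y ∈ K)
    (hd : dist x y = Metric.diam K)
    (hΓ : IsGeodesicLine Γ) (hxΓ : x ∈ Γ) (hyΓ : y ∈ Γ) :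
    IsDoubleNormal K Γ ∧ Proj Γ K = K ∩ Γ ∧ K ∩ Γ = Seg x y ∧
      ∃ Γ' : Set ℍ, IsGeodesicLine Γ' ∧ IsDoubleNormal K Γ' := by
  obtain ⟨γ, hγ, rfl⟩ := hΓ
  obtain ⟨a, rfl⟩ := hxΓ
  obtain ⟨b, rfl⟩ := hyΓ
  have hdiam : ∀ p ∈ K, ∀ q ∈ K, dist p q ≤ |a - b| := fun p hp q hq =>
    (hγ a b ▸ hd) ▸ dist_le_diam_of_mem hK.1.isBounded hp hq
  have hproj_seg : Proj (range γ) K ⊆ Seg (γ a) (γ b) := by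
    rintro _ ⟨⟨t, rfl⟩, k, hk, hfoot⟩
    refine hγ.mem_seg_iff.2 (mem_uIcc_of_abs_sub_le ?_ ?_)
    · exact (hγ.abs_sub_le_dist_of_dist_eq_infDist hfoot a).trans (hdiam k hk _ hx)
    · exact (hγ.abs_sub_le_dist_of_dist_eq_infDist hfoot b).trans (hdiam k hk _ hy)
  have hseg_inter : Seg (γ a) (γ b) ⊆ K ∩ range γ := fun z hz =>
    ⟨hK.2.1 hx hy hz, image_subset_range γ _ (hγ.seg_eq_image a b ▸ hz)⟩
  have hproj : Proj (range γ) K = K ∩ range γ :=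
    (hproj_seg.trans hseg_inter).antisymm (inter_subset_proj _ K)
  have hseg : K ∩ range γ = Seg (γ a) (γ b) :=
    ((inter_subset_proj _ K).trans hproj_seg).antisymm hseg_inter
  have hnormal : IsDoubleNormal K (range γ) := ⟨⟨γ a, hx, a, rfl⟩, hproj⟩
  exact ⟨hnormal, hproj, hseg, range γ, ⟨γ, hγ, rfl⟩, hnormal⟩
end
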